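/- arXiv:1910.02493 — 4 statements merged into one kernel-verified Lean document; each statement's English description precedes it below -/
import Mathlib

section
/- The integral ∫_{-∞}^{∞} u·(σ(u) - 1_{(0,∞)}(u)) du converges and equals -π²/6. -/
noncomputable def sigmaF (x : ℝ) : ℝ := 1 / (1 + Real.exp (-x))

/-! The integrand equals `-|u| σ(-|u|)`, an even function, so the integral is
`-2 ∫₀^∞ x σ(-x) dx = -2 ∫₀^∞ x / (1 + eˣ) dx`. For `x > 0`, expanding `1 / (1 + eˣ)` as the
geometric series `∑ (-1)ⁿ e^{-(n+1)x}` and integrating termwise (legitimate because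
`∫₀^∞ x e^{-(n+1)x} dx = 1/(n+1)²` is summable) gives `η(2) = ∑ (-1)ⁿ/(n+1)² = ζ(2)/2 = π²/12`. -/

open MeasureTheory Real Set

lemma integrable_comp_abs_of_integrableOn_Ioi {E : Type*} [NormedAddCommGroup E] {f : ℝ → E}
    (hf : IntegrableOn f (Ioi 0)) : Integrable (fun x => f |x|) := by
  have hIoi : IntegrableOn (fun x => f |x|) (Ioi 0) :=
    hf.congr_fun (fun x hx => by rw [abs_of_pos hx]) measurableSet_Ioi
  have hIic : IntegrableOn (fun x => f |x|) (Iic 0) := by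
    rw [← Measure.map_neg_eq_self (volume : Measure ℝ),
      measurableEmbedding_neg.integrableOn_map_iff]
    simp_rw [Function.comp_def, abs_neg, neg_preimage, neg_Iic, neg_zero]
    exact (integrableOn_Ici_iff_integrableOn_Ioi).mpr hIoi
  simpa only [Iic_union_Ioi, integrableOn_univ] using hIic.union hIoi

lemma integrableOn_mul_exp_neg_mul_Ioi {a : ℝ} (ha : 0 < a) :
    IntegrableOn (fun x : ℝ => x * exp (-(a * x))) (Ioi 0) := by
  simpa [rpow_one, neg_mul] using
    integrableOn_rpow_mul_exp_neg_mul_rpow (by norm_num : (-1 : ℝ) < 1) one_pos ha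

lemma integral_mul_exp_neg_mul_Ioi {a : ℝ} (ha : 0 < a) :
    ∫ x in Ioi (0 : ℝ), x * exp (-(a * x)) = 1 / a ^ 2 := by
  have h := integral_rpow_mul_exp_neg_mul_Ioi two_pos ha
  norm_num [Gamma_two] at h
  simpa [div_pow] using h

lemma hasSum_neg_one_pow_div_succ_sq :
    HasSum (fun n : ℕ => (-1) ^ n / ((n : ℝ) + 1) ^ 2) (π ^ 2 / 12) := by
  set b : ℕ → ℝ := fun n => 1 / ((n : ℝ) + 1) ^ 2
  have hb : HasSum b (π ^ 2 / 6) := by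
    simpa [b] using (hasSum_nat_add_iff' 1).mpr hasSum_zeta_two
  have hodd : HasSum (fun k => b (2 * k + 1)) (π ^ 2 / 24) := by
    have hb4 : (fun k => b (2 * k + 1)) = fun k => b k / 4 := by
      ext k; simp only [b]; push_cast; field_simp; ring
    rw [hb4, show π ^ 2 / 24 = π ^ 2 / 6 / 4 by ring]
    exact hb.div_const 4
  obtain ⟨s, heven⟩ : Summable (fun k => b (2 * k)) :=
    hb.summable.comp_injective (mul_right_injective₀ two_ne_zero)
  -- the odd squares carry `ζ(2) - ζ(2)/4`
  obtain rfl : s = π ^ 2 / 8 := by linarith [(heven.even_add_odd hodd).unique hb]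
  set f : ℕ → ℝ := fun n => (-1) ^ n / ((n : ℝ) + 1) ^ 2
  have hfe : (fun k => f (2 * k)) = fun k => b (2 * k) := by ext k; simp [f, b, pow_mul]
  have hfo : (fun k => f (2 * k + 1)) = fun k => -b (2 * k + 1) := by
    ext k; simp [f, b, pow_succ, pow_mul, neg_div]
  have h := (hfe ▸ heven).even_add_odd (hfo ▸ hodd.neg)
  rwa [show π ^ 2 / 8 + -(π ^ 2 / 24) = π ^ 2 / 12 by ring] at h

lemma hasSum_sigmoid_neg {x : ℝ} (hx : 0 < x) :
    HasSum (fun n : ℕ => (-1) ^ n * exp (-((n + 1) * x))) (sigmoid (-x)) := by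
  have hr : |-exp (-x)| < 1 := by
    rw [abs_neg, abs_of_pos (exp_pos _), exp_lt_one_iff]; linarith
  have hsum : sigmoid (-x) = exp (-x) * (1 - -exp (-x))⁻¹ := by
    rw [← sigmoid_mul_rexp_neg, sigmoid_def, sub_neg_eq_add, mul_comm]
  have hterm (n : ℕ) : (-1) ^ n * exp (-((n + 1) * x)) = exp (-x) * (-exp (-x)) ^ n := by
    rw [neg_pow (exp (-x)), ← exp_nat_mul, add_mul, one_mul, neg_add, exp_add, mul_neg]
    ring
  simpa only [hterm, hsum] using (hasSum_geometric_of_abs_lt_one hr).mul_left (exp (-x))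

lemma integrableOn_mul_sigmoid_neg_Ioi : IntegrableOn (fun x => x * sigmoid (-x)) (Ioi 0) := by
  refine (integrableOn_mul_exp_neg_mul_Ioi one_pos).mono' (by fun_prop) ?_
  filter_upwards [self_mem_ae_restrict measurableSet_Ioi] with x (hx : 0 < x)
  rw [norm_of_nonneg (by positivity [sigmoid_pos (-x)]), one_mul, ← sigmoid_mul_rexp_neg]
  exact mul_le_mul_of_nonneg_left (mul_le_of_le_one_left (exp_pos _).le (sigmoid_le_one x)) hx.le

lemma integral_mul_sigmoid_neg_Ioi : ∫ x in Ioi (0 : ℝ), x * sigmoid (-x) = π ^ 2 / 12 := by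
  set F : ℕ → ℝ → ℝ := fun n x => (-1) ^ n * (x * exp (-((n + 1) * x)))
  have hpos (n : ℕ) : (0 : ℝ) < n + 1 := n.cast_add_one_pos
  have hF_int (n : ℕ) : IntegrableOn (F n) (Ioi 0) :=
    (integrableOn_mul_exp_neg_mul_Ioi (hpos n)).const_mul _
  have hF_integral (n : ℕ) : ∫ x in Ioi (0 : ℝ), F n x = (-1) ^ n / ((n : ℝ) + 1) ^ 2 := by
    rw [integral_const_mul, integral_mul_exp_neg_mul_Ioi (hpos n), mul_one_div]
  have hF_norm (n : ℕ) : ∫ x in Ioi (0 : ℝ), ‖F n x‖ = 1 / ((n : ℝ) + 1) ^ 2 := by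
    rw [← integral_mul_exp_neg_mul_Ioi (hpos n)]
    refine setIntegral_congr_fun measurableSet_Ioi fun x (hx : 0 < x) => ?_
    simp [F, norm_mul, abs_of_pos hx]
  have hF_sum : Summable fun n => ∫ x in Ioi (0 : ℝ), ‖F n x‖ := by
    simpa only [hF_norm, Nat.cast_add, Nat.cast_one] using
      (summable_nat_add_iff 1).mpr hasSum_zeta_two.summable
  have h := hasSum_integral_of_summable_integral_norm hF_int hF_sum
  have h_tsum : EqOn (fun x => ∑' n, F n x) (fun x => x * sigmoid (-x)) (Ioi 0) :=
    fun x (hx : 0 < x) => by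
      simpa [F, mul_left_comm] using ((hasSum_sigmoid_neg hx).mul_left x).tsum_eq
  rw [setIntegral_congr_fun measurableSet_Ioi h_tsum, funext hF_integral] at h
  exact h.unique hasSum_neg_one_pow_div_succ_sq

lemma sigmaF_eq_sigmoid : sigmaF = sigmoid := funext fun _ => one_div _

lemma mul_sigmoid_sub_indicator (u : ℝ) :
    u * (sigmoid u - (Ioi 0).indicator (fun _ => (1 : ℝ)) u) = -(|u| * sigmoid (-|u|)) := by
  rcases le_or_gt u 0 with hu | hu
  · rw [indicator_of_notMem (show u ∉ Ioi 0 from not_lt.mpr hu), abs_of_nonpos hu, neg_neg]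
    ring
  · rw [indicator_of_mem (show u ∈ Ioi 0 from hu), abs_of_pos hu, sigmoid_neg]
    ring

theorem integral_mul_sigma_sub_indicator :
    MeasureTheory.Integrable
      (fun u : ℝ => u * (sigmaF u - Set.indicator (Set.Ioi (0:ℝ)) (fun _ => (1:ℝ)) u)) ∧
    ∫ u : ℝ, u * (sigmaF u - Set.indicator (Set.Ioi (0:ℝ)) (fun _ => (1:ℝ)) u)
      = -(Real.pi ^ 2 / 6) := by
  simp only [sigmaF_eq_sigmoid, mul_sigmoid_sub_indicator]
  refine ⟨(integrable_comp_abs_of_integrableOn_Ioi integrableOn_mul_sigmoid_neg_Ioi).neg, ?_⟩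
  rw [integral_neg, integral_comp_abs (f := fun x => x * sigmoid (-x)),
    integral_mul_sigmoid_neg_Ioi]
  ring
end

section
/- For 0 < ξ < λ₀ real, the Cauchy principal value P.V. ∫_0^{λ₀} √(λ₀-λ)/(ξ-λ) dλ equals 2√λ₀ - 2√(λ₀-ξ)·log(√(λ₀-ξ)+√λ₀) + √(λ₀-ξ)·log ξ. -/
/-!
With `a = √(λ₀ - ξ)` and `u = √(λ₀ - λ)` one has `ξ - λ = u² - a²`, and the integrand has the
primitive `F = G - a log |ξ - λ|`, where `G = -2u + 2a log (u + a)` is continuous on all of `ℝ`.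
The logarithmic parts of `F (ξ - ε)` and `F (ξ + ε)` cancel exactly, so the truncated integral is
`G (ξ - ε) - G (ξ + ε) + F λ₀ - F 0`, which tends to `F λ₀ - F 0`.
-/

open Real Filter Set Topology

namespace PVSqrt

variable {lam0 ξ : ℝ}

noncomputable def regular (lam0 ξ x : ℝ) : ℝ :=
  -2 * √(lam0 - x) + 2 * √(lam0 - ξ) * log (√(lam0 - x) + √(lam0 - ξ))

-- `Real.log` is `log |·|`, so this is a primitive on both sides of `ξ`.
noncomputable def primitive (lam0 ξ x : ℝ) : ℝ :=
  regular lam0 ξ x - √(lam0 - ξ) * log (ξ - x)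

theorem continuous_regular (h : ξ < lam0) : Continuous (regular lam0 ξ) := by
  have ha : 0 < √(lam0 - ξ) := sqrt_pos.2 (sub_pos.2 h)
  unfold regular
  fun_prop (disch := exact fun x => (add_pos_of_nonneg_of_pos (sqrt_nonneg _) ha).ne')

theorem continuousAt_primitive (h : ξ < lam0) {x : ℝ} (hx : x ≠ ξ) :
    ContinuousAt (primitive lam0 ξ) x :=
  (continuous_regular h).continuousAt.sub <|
    continuousAt_const.mul <| (continuousAt_const.sub continuousAt_id).log (sub_ne_zero.2 hx.symm)

theorem hasDerivAt_primitive (h : ξ ≤ lam0) {x : ℝ} (hx : x < lam0) (hxξ : x ≠ ξ) :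
    HasDerivAt (primitive lam0 ξ) (√(lam0 - x) / (ξ - x)) x := by
  set a := √(lam0 - ξ)
  set u := √(lam0 - x)
  have hu : 0 < u := sqrt_pos.2 (sub_pos.2 hx)
  have ha : 0 ≤ a := sqrt_nonneg _
  have hξx : ξ - x ≠ 0 := sub_ne_zero.2 hxξ.symm
  have hsq : ξ - x = u ^ 2 - a ^ 2 := by
    rw [sq_sqrt (sub_pos.2 hx).le, sq_sqrt (sub_nonneg.2 h)]; ring
  have hU : HasDerivAt (fun y => √(lam0 - y)) (-1 / (2 * u)) x :=
    ((hasDerivAt_id x).const_sub lam0).sqrt (sub_pos.2 hx).ne'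
  have hL : HasDerivAt (fun y => log (√(lam0 - y) + a)) (-1 / (2 * u) / (u + a)) x :=
    (hU.add_const a).log (by positivity)
  have hM : HasDerivAt (fun y => log (ξ - y)) (-1 / (ξ - x)) x :=
    ((hasDerivAt_id x).const_sub ξ).log hξx
  refine (((hU.const_mul (-2)).add (hL.const_mul (2 * a))).sub (hM.const_mul a)).congr_deriv ?_
  rw [hsq] at hξx ⊢
  field_simp
  ring

theorem integral_Ioo_eq_primitive_sub (h : ξ < lam0) {b c : ℝ} (hbc : b ≤ c) (hc : c ≤ lam0)
    (hξ : ξ ∉ Icc b c) :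
    ∫ x in Ioo b c, √(lam0 - x) / (ξ - x) = primitive lam0 ξ c - primitive lam0 ξ b := by
  have hne : ∀ x ∈ Icc b c, x ≠ ξ := fun x hx hxξ => hξ (hxξ ▸ hx)
  rw [← MeasureTheory.integral_Ioc_eq_integral_Ioo, ← intervalIntegral.integral_of_le hbc]
  refine intervalIntegral.integral_eq_sub_of_hasDerivAt_of_le hbc
    (fun x hx => (continuousAt_primitive h (hne x hx)).continuousWithinAt)
    (fun x hx => hasDerivAt_primitive h.le (hx.2.trans_le hc) (hne x (Ioo_subset_Icc_self hx)))
    (ContinuousOn.intervalIntegrable ?_)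
  rw [uIcc_of_le hbc]
  exact ((continuous_const.sub continuous_id).sqrt.continuousOn).div
    (continuous_const.sub continuous_id).continuousOn fun x hx => sub_ne_zero.2 (hne x hx).symm

theorem primitive_sub_primitive (ε : ℝ) :
    primitive lam0 ξ (ξ - ε) - primitive lam0 ξ (ξ + ε) =
      regular lam0 ξ (ξ - ε) - regular lam0 ξ (ξ + ε) := by
  simp only [primitive, sub_sub_cancel, sub_add_cancel_left, log_neg_eq_log]
  ring

theorem primitive_self (h : ξ ≤ lam0) : primitive lam0 ξ lam0 = 0 := by
  rw [primitive, regular, sub_self, sqrt_zero, zero_add, ← neg_sub lam0 ξ, log_neg_eq_log,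
    log_sqrt (sub_nonneg.2 h)]
  ring

theorem integral_add_integral_eq_regular_sub (h : ξ < lam0) {ε : ℝ} (hε : 0 < ε)
    (hεξ : ε < ξ) (hεlam : ε < lam0 - ξ) :
    (∫ x in Ioo 0 (ξ - ε), √(lam0 - x) / (ξ - x)) + ∫ x in Ioo (ξ + ε) lam0, √(lam0 - x) / (ξ - x)
      = regular lam0 ξ (ξ - ε) - regular lam0 ξ (ξ + ε) - primitive lam0 ξ 0 := by
  rw [integral_Ioo_eq_primitive_sub h (by linarith) (by linarith) (fun hξ => by linarith [hξ.2]),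
    integral_Ioo_eq_primitive_sub h (by linarith) le_rfl (fun hξ => by linarith [hξ.1]),
    primitive_self h.le, ← primitive_sub_primitive]
  ring

end PVSqrt

open PVSqrt in
/-- The Cauchy principal value `P.V. ∫_0^{λ₀} √(λ₀-λ)/(ξ-λ) dλ`, as a limit of
integrals with a symmetric window of size `ε` removed around `ξ`. -/
theorem pv_integral_sqrt (lam0 ξ : ℝ) (h0 : 0 < ξ) (h1 : ξ < lam0) :
    Filter.Tendsto
      (fun ε : ℝ =>
        (∫ lam in Set.Ioo 0 (ξ - ε), Real.sqrt (lam0 - lam) / (ξ - lam)) +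
        ∫ lam in Set.Ioo (ξ + ε) lam0, Real.sqrt (lam0 - lam) / (ξ - lam))
      (nhdsWithin 0 (Set.Ioi 0))
      (nhds (2 * Real.sqrt lam0
        - 2 * Real.sqrt (lam0 - ξ) * Real.log (Real.sqrt (lam0 - ξ) + Real.sqrt lam0)
        + Real.sqrt (lam0 - ξ) * Real.log ξ)) := by
  have hG : Continuous fun ε => regular lam0 ξ (ξ - ε) - regular lam0 ξ (ξ + ε) :=
    ((continuous_regular h1).comp (continuous_const.sub continuous_id)).sub
      ((continuous_regular h1).comp (continuous_const.add continuous_id))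
  have hlim : Tendsto (fun ε => regular lam0 ξ (ξ - ε) - regular lam0 ξ (ξ + ε) - primitive lam0 ξ 0)
      (𝓝[>] 0) (𝓝 (regular lam0 ξ (ξ - 0) - regular lam0 ξ (ξ + 0) - primitive lam0 ξ 0)) :=
    ((hG.tendsto 0).mono_left nhdsWithin_le_nhds).sub_const _
  have hval : regular lam0 ξ (ξ - 0) - regular lam0 ξ (ξ + 0) - primitive lam0 ξ 0 =
      2 * √lam0 - 2 * √(lam0 - ξ) * log (√(lam0 - ξ) + √lam0) + √(lam0 - ξ) * log ξ := by
    rw [sub_zero, add_zero, sub_self, primitive, regular, sub_zero, sub_zero, add_comm √lam0]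
    ring
  rw [hval] at hlim
  refine hlim.congr' ?_
  filter_upwards [Ioo_mem_nhdsGT (lt_min h0 (sub_pos.2 h1))] with ε ⟨hε, hεmin⟩
  exact (integral_add_integral_eq_regular_sub h1 hε (hεmin.trans_le (min_le_left _ _))
    (hεmin.trans_le (min_le_right _ _))).symm
end

section
/- For 0 < ξ < λ₀ real, the Cauchy principal value P.V. ∫_0^{λ₀} λ√(λ₀-λ)/(ξ-λ) dλ equals -(2/3)λ₀^{3/2} + 2√λ₀·ξ - 2√(λ₀-ξ)·ξ·log(√(λ₀-ξ)+√λ₀) + √(λ₀-ξ)·ξ·log ξ. -/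
/-!
With `s = √(λ₀ - x)` and `a = √(λ₀ - ξ)` one has `ξ - x = (s - a)(s + a)`, which yields the
primitive `(2/3)s³ - 2ξs + 2ξa log(s + a) - ξa log|x - ξ|` of the integrand. Its only singularity
is the logarithm `log|x - ξ|`, which takes the same value at `ξ - ε` and `ξ + ε`; so the
symmetric excision cancels it, and the principal value is the difference of the primitive at the
endpoints `λ₀` and `0`.
-/

open MeasureTheory Set Filter Topology

theorem setIntegral_Ioo_eq_sub_of_hasDerivAt {f G : ℝ → ℝ} {u v : ℝ} (huv : u ≤ v)
    (hG : ContinuousOn G (Icc u v)) (hderiv : ∀ x ∈ Ioo u v, HasDerivAt G (f x) x)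
    (hf : ContinuousOn f (Icc u v)) :
    ∫ x in Ioo u v, f x = G v - G u := by
  rw [← integral_Ioc_eq_integral_Ioo, ← intervalIntegral.integral_of_le huv]
  exact intervalIntegral.integral_eq_sub_of_hasDerivAt_of_le huv hG hderiv
    (hf.intervalIntegrable_of_Icc huv)

theorem ContinuousAt.tendsto_comp_sub_sub_comp_add {F : ℝ → ℝ} {c : ℝ} (hF : ContinuousAt F c) :
    Tendsto (fun ε => F (c - ε) - F (c + ε)) (𝓝[>] 0) (𝓝 0) := by
  have hleft : Tendsto (fun ε => F (c - ε)) (𝓝 0) (𝓝 (F c)) :=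
    hF.tendsto.comp (by simpa using (tendsto_id (x := 𝓝 (0:ℝ))).const_sub c)
  have hright : Tendsto (fun ε => F (c + ε)) (𝓝 0) (𝓝 (F c)) :=
    hF.tendsto.comp (by simpa using (tendsto_id (x := 𝓝 (0:ℝ))).const_add c)
  simpa using (hleft.sub hright).mono_left nhdsWithin_le_nhds

theorem tendsto_pv_integral_of_hasDerivAt_add_log {f F : ℝ → ℝ} {a b c k : ℝ}
    (hac : a < c) (hcb : c < b) (hF : ContinuousOn F (Icc a b))
    (hderiv : ∀ x ∈ Ioo a b, x ≠ c → HasDerivAt (fun y => F y + k * Real.log |y - c|) (f x) x)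
    (hf : ContinuousOn f (Icc a b \ {c})) :
    Tendsto (fun ε => (∫ x in Ioo a (c - ε), f x) + ∫ x in Ioo (c + ε) b, f x) (𝓝[>] 0)
      (𝓝 (F b + k * Real.log |b - c| - (F a + k * Real.log |a - c|))) := by
  set G : ℝ → ℝ := fun y => F y + k * Real.log |y - c|
  have hG : ∀ {u v}, a ≤ u → v ≤ b → c ∉ Icc u v → ContinuousOn G (Icc u v) := by
    intro u v hau hvb hc
    refine (hF.mono (Icc_subset_Icc hau hvb)).add
      (continuousOn_const.mul (ContinuousOn.log (by fun_prop) ?_))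
    exact fun x hx => abs_ne_zero.2 (sub_ne_zero.2 fun h => hc (h ▸ hx))
  have hpiece : ∀ {u v}, a ≤ u → u ≤ v → v ≤ b → c ∉ Icc u v →
      ∫ x in Ioo u v, f x = G v - G u := fun hau huv hvb hc =>
    setIntegral_Ioo_eq_sub_of_hasDerivAt huv (hG hau hvb hc)
      (fun x hx => hderiv x ⟨hau.trans_lt hx.1, hx.2.trans_le hvb⟩
        fun h => hc (h ▸ Ioo_subset_Icc_self hx))
      (hf.mono fun x hx => ⟨Icc_subset_Icc hau hvb hx, fun h => hc (h ▸ hx)⟩)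
  -- `log|(c - ε) - c| = log|(c + ε) - c|`, so only the jump of `F` remains.
  have hsplit : ∀ ε ∈ Ioo 0 (min (c - a) (b - c)),
      (∫ x in Ioo a (c - ε), f x) + ∫ x in Ioo (c + ε) b, f x
        = G b - G a + (F (c - ε) - F (c + ε)) := by
    rintro ε ⟨hε, hεmin⟩
    have hεa : ε < c - a := hεmin.trans_le (min_le_left _ _)
    have hεb : ε < b - c := hεmin.trans_le (min_le_right _ _)
    rw [hpiece le_rfl (by linarith) (by linarith) fun h => by linarith [h.2],
      hpiece (by linarith) (by linarith) le_rfl fun h => by linarith [h.1]]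
    simp only [G, sub_sub_cancel_left, add_sub_cancel_left, abs_neg]
    ring
  have hjump := (hF.continuousAt (Icc_mem_nhds hac hcb)).tendsto_comp_sub_sub_comp_add
  have hlim : Tendsto (fun ε => G b - G a + (F (c - ε) - F (c + ε))) (𝓝[>] 0)
      (𝓝 (G b - G a)) := by
    simpa only [add_zero] using tendsto_const_nhds.add hjump
  refine hlim.congr' (EventuallyEq.symm ?_)
  filter_upwards [Ioo_mem_nhdsGT (lt_min (sub_pos.2 hac) (sub_pos.2 hcb))] with ε hε
  exact hsplit ε hε

noncomputable def regularPrimitive (lam0 ξ x : ℝ) : ℝ :=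
  2 / 3 * √(lam0 - x) ^ 3 - 2 * ξ * √(lam0 - x)
    + 2 * ξ * √(lam0 - ξ) * Real.log (√(lam0 - x) + √(lam0 - ξ))

theorem continuous_regularPrimitive {lam0 ξ : ℝ} (hξ : ξ < lam0) :
    Continuous (regularPrimitive lam0 ξ) := by
  have ha : 0 < √(lam0 - ξ) := Real.sqrt_pos.2 (sub_pos.2 hξ)
  unfold regularPrimitive
  refine Continuous.add (by fun_prop) (continuous_const.mul (Continuous.log (by fun_prop) ?_))
  exact fun x => (add_pos_of_nonneg_of_pos (Real.sqrt_nonneg _) ha).ne'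

theorem hasDerivAt_regularPrimitive_add_log {lam0 ξ x : ℝ} (hξ : ξ ≤ lam0) (hx : x < lam0)
    (hne : x ≠ ξ) :
    HasDerivAt (fun y => regularPrimitive lam0 ξ y + -(ξ * √(lam0 - ξ)) * Real.log |y - ξ|)
      (x * √(lam0 - x) / (ξ - x)) x := by
  set a := √(lam0 - ξ)
  have hs : 0 < √(lam0 - x) := Real.sqrt_pos.2 (sub_pos.2 hx)
  have hs2 : √(lam0 - x) ^ 2 = lam0 - x := Real.sq_sqrt (sub_pos.2 hx).le
  have ha2 : a ^ 2 = lam0 - ξ := Real.sq_sqrt (sub_nonneg.2 hξ)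
  have hxξ : x - ξ ≠ 0 := sub_ne_zero.2 hne
  have hS : HasDerivAt (fun y => √(lam0 - y)) (-1 / (2 * √(lam0 - x))) x := by
    simpa using ((hasDerivAt_id x).const_sub lam0).sqrt (sub_pos.2 hx).ne'
  have hL : HasDerivAt (fun y => Real.log |y - ξ|) (1 / (x - ξ)) x := by
    simpa [Real.log_abs] using ((hasDerivAt_id x).sub_const ξ).log hxξ
  have hsa : √(lam0 - x) + a ≠ 0 := by positivity
  refine (((((hS.pow 3).const_mul (2 / 3)).sub (hS.const_mul (2 * ξ))).add
    (((hS.add_const a).log hsa).const_mul (2 * ξ * a))).add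
      (hL.const_mul (-(ξ * a)))).congr_deriv ?_
  field_simp
  linear_combination (-3 * √(lam0 - x) * (x - ξ) * ξ) * (hs2 - ha2)

theorem regularPrimitive_add_log_sub {lam0 ξ : ℝ} (h0 : 0 < ξ) (h1 : ξ < lam0) :
    regularPrimitive lam0 ξ lam0 + -(ξ * √(lam0 - ξ)) * Real.log |lam0 - ξ|
        - (regularPrimitive lam0 ξ 0 + -(ξ * √(lam0 - ξ)) * Real.log |0 - ξ|)
      = -(2/3) * lam0 ^ ((3:ℝ)/2) + 2 * Real.sqrt lam0 * ξ
        - 2 * Real.sqrt (lam0 - ξ) * ξ * Real.log (Real.sqrt (lam0 - ξ) + Real.sqrt lam0)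
        + Real.sqrt (lam0 - ξ) * ξ * Real.log ξ := by
  have hsq : lam0 - ξ = √(lam0 - ξ) ^ 2 := (Real.sq_sqrt (sub_pos.2 h1).le).symm
  have hpow : lam0 ^ ((3:ℝ)/2) = √lam0 ^ 3 := by
    rw [Real.rpow_div_two_eq_sqrt _ (h0.trans h1).le]; norm_cast
  rw [hpow, zero_sub, abs_neg, abs_of_pos h0, abs_of_pos (sub_pos.2 h1)]
  nth_rw 2 [hsq]
  simp only [regularPrimitive, sub_self, sub_zero, Real.sqrt_zero, zero_add, Real.log_pow]
  rw [add_comm √lam0]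
  ring

/-- The Cauchy principal value `P.V. ∫_0^{λ₀} λ√(λ₀-λ)/(ξ-λ) dλ`, as a limit of
integrals with a symmetric window of size `ε` removed around `ξ`. -/
theorem pv_integral_mul_sqrt (lam0 ξ : ℝ) (h0 : 0 < ξ) (h1 : ξ < lam0) :
    Filter.Tendsto
      (fun ε : ℝ =>
        (∫ lam in Set.Ioo 0 (ξ - ε), lam * Real.sqrt (lam0 - lam) / (ξ - lam)) +
        ∫ lam in Set.Ioo (ξ + ε) lam0, lam * Real.sqrt (lam0 - lam) / (ξ - lam))
      (nhdsWithin 0 (Set.Ioi 0))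
      (nhds (-(2/3) * lam0 ^ ((3:ℝ)/2) + 2 * Real.sqrt lam0 * ξ
        - 2 * Real.sqrt (lam0 - ξ) * ξ * Real.log (Real.sqrt (lam0 - ξ) + Real.sqrt lam0)
        + Real.sqrt (lam0 - ξ) * ξ * Real.log ξ)) := by
  rw [← regularPrimitive_add_log_sub h0 h1]
  refine tendsto_pv_integral_of_hasDerivAt_add_log h0 h1
    (continuous_regularPrimitive h1).continuousOn
    (fun x hx hne => hasDerivAt_regularPrimitive_add_log h1.le hx.2 hne) ?_
  exact ContinuousOn.div (by fun_prop) (by fun_prop) fun x hx => sub_ne_zero.2 (Ne.symm hx.2)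
end

section
/- Fix s, T > 0 and set c = s^{-1/2}T^{1/3}/π. The equation λ₀ - 1 = -c·∫_{-∞}^{0} σ(sT^{1/3}(u+λ₀))/√(-u) du has a unique real solution λ₀, and this solution satisfies λ₀ < 1. -/
open Real MeasureTheory Set

lemma sig_pos (x : ℝ) : 0 < sigmaF x := by
  unfold sigmaF; positivity

lemma sig_le_one (x : ℝ) : sigmaF x ≤ 1 := by
  unfold sigmaF
  rw [div_le_one (by positivity)]
  nlinarith [Real.exp_pos (-x)]

lemma sig_le_exp (x : ℝ) : sigmaF x ≤ Real.exp x := by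
  unfold sigmaF
  rw [div_le_iff₀ (by positivity)]
  have h := Real.exp_pos x
  have : Real.exp x * Real.exp (-x) = 1 := by
    rw [← Real.exp_add]; simp
  nlinarith

lemma sig_mono : Monotone sigmaF := by
  intro x y hxy
  unfold sigmaF
  apply div_le_div_of_nonneg_left one_pos.le (by positivity)
  have := Real.exp_le_exp.2 (neg_le_neg hxy)
  linarith

lemma sig_cont : Continuous sigmaF := by
  unfold sigmaF
  apply Continuous.div continuous_const
  · exact continuous_const.add (Real.continuous_exp.comp continuous_neg)
  · intro x; positivity

lemma integrableOn_comp_neg {f : ℝ → ℝ} {s : Set ℝ} (hf : IntegrableOn f s) :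
    IntegrableOn (fun x => f (-x)) (-s) := by
  have := ((Measure.measurePreserving_neg (volume : Measure ℝ)).integrableOn_comp_preimage
      (Homeomorph.neg ℝ).measurableEmbedding (f := f) (s := s)).2 hf
  simpa [Function.comp_def, Set.neg_preimage] using this

lemma f_meas (a l : ℝ) :
    AEStronglyMeasurable (fun u => sigmaF (a*(u+l)) / Real.sqrt (-u))
      (volume.restrict (Iio (0:ℝ))) := by
  apply Measurable.aestronglyMeasurable
  exact ((sig_cont.comp (by continuity)).measurable).div
    ((Real.continuous_sqrt.comp continuous_neg).measurable)

lemma int_sqrt : IntegrableOn (fun u : ℝ => ((-u) ^ (-(1/2:ℝ)))) (Ioo (-1:ℝ) 0) := by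
  have h : IntegrableOn (fun x : ℝ => x ^ (-(1/2:ℝ))) (Ioo (0:ℝ) 1) :=
    (intervalIntegral.integrableOn_Ioo_rpow_iff one_pos).2 (by norm_num)
  have := integrableOn_comp_neg h
  simpa using this

lemma int_exp {a : ℝ} (ha : 0 < a) : IntegrableOn (fun u : ℝ => Real.exp (a*u)) (Iio (-1:ℝ)) := by
  have h := exp_neg_integrableOn_Ioi 1 ha
  have := integrableOn_comp_neg h
  simpa [neg_Ioi, mul_comm] using this

lemma key_integrable {a : ℝ} (ha : 0 < a) (l : ℝ) :
    IntegrableOn (fun u => sigmaF (a*(u+l)) / Real.sqrt (-u)) (Iio (0:ℝ)) := by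
  have hsplit : Iio (0:ℝ) = Iio (-1) ∪ Ico (-1) 0 := by
    rw [Iio_union_Ico_eq_Iio]; norm_num
  rw [hsplit]
  apply IntegrableOn.union
  · -- Iio (-1)
    apply Integrable.mono' ((int_exp ha).const_mul (Real.exp (a*l)))
    · exact (f_meas a l).mono_measure (Measure.restrict_mono (Iio_subset_Iio (by norm_num)) le_rfl)
    · rw [ae_restrict_iff' measurableSet_Iio]
      filter_upwards with u hu
      simp only [Set.mem_Iio] at hu
      have h1 : (0:ℝ) ≤ sigmaF (a*(u+l)) / Real.sqrt (-u) := by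
        apply div_nonneg (sig_pos _).le (Real.sqrt_nonneg _)
      rw [Real.norm_of_nonneg h1]
      have hsq : (1:ℝ) ≤ Real.sqrt (-u) := by
        rw [show (1:ℝ) = Real.sqrt 1 by simp]
        exact Real.sqrt_le_sqrt (by linarith)
      calc sigmaF (a*(u+l)) / Real.sqrt (-u) ≤ sigmaF (a*(u+l)) / 1 := by
            apply div_le_div_of_nonneg_left (sig_pos _).le one_pos hsq
        _ = sigmaF (a*(u+l)) := by ring
        _ ≤ Real.exp (a*(u+l)) := sig_le_exp _
        _ = Real.exp (a*l) * Real.exp (a*u) := by rw [← Real.exp_add]; ring_nf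
  · -- Ico (-1) 0
    rw [IntegrableOn, Measure.restrict_congr_set Ioo_ae_eq_Ico.symm]
    apply Integrable.mono' int_sqrt
    · exact (f_meas a l).mono_measure (Measure.restrict_mono (by intro x hx; exact hx.2) le_rfl)
    · rw [ae_restrict_iff' measurableSet_Ioo]
      filter_upwards with u hu
      have hu0 : (0:ℝ) < -u := by simpa using neg_pos.2 hu.2
      have h1 : (0:ℝ) ≤ sigmaF (a*(u+l)) / Real.sqrt (-u) := by
        apply div_nonneg (sig_pos _).le (Real.sqrt_nonneg _)
      rw [Real.norm_of_nonneg h1]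
      rw [Real.rpow_neg hu0.le, ← Real.sqrt_eq_rpow]
      rw [div_le_iff₀ (Real.sqrt_pos.2 hu0), inv_mul_cancel₀ (Real.sqrt_pos.2 hu0).ne']
      exact sig_le_one _

noncomputable def Fint (a l : ℝ) : ℝ := ∫ u in Iio (0:ℝ), sigmaF (a*(u+l)) / Real.sqrt (-u)

lemma F_mono {a : ℝ} (ha : 0 < a) : Monotone (Fint a) := by
  intro l1 l2 h
  apply setIntegral_mono_on (key_integrable ha l1) (key_integrable ha l2) measurableSet_Iio
  intro u _
  gcongr
  exact sig_mono (by nlinarith)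

lemma F_pos {a : ℝ} (ha : 0 < a) (l : ℝ) : 0 < Fint a l := by
  rw [Fint, setIntegral_pos_iff_support_of_nonneg_ae]
  · rw [Set.inter_eq_right.2]
    · simp [Real.volume_Iio]
    · intro u hu
      simp only [Set.mem_Iio] at hu
      simp only [Function.mem_support]
      have h1 : 0 < Real.sqrt (-u) := Real.sqrt_pos.2 (by linarith)
      have h2 := sig_pos (a*(u+l))
      positivity
  · exact Filter.Eventually.of_forall fun u => div_nonneg (sig_pos _).le (Real.sqrt_nonneg _)
  · exact key_integrable ha l

lemma F_cont {a : ℝ} (ha : 0 < a) : Continuous (Fint a) := by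
  rw [continuous_iff_continuousAt]
  intro l0
  apply MeasureTheory.continuousAt_of_dominated
    (bound := fun u => sigmaF (a*(u+(l0+1))) / Real.sqrt (-u))
  · filter_upwards with l using f_meas a l
  · filter_upwards [Metric.ball_mem_nhds l0 one_pos] with l hl
    rw [ae_restrict_iff' measurableSet_Iio]
    filter_upwards with u _
    rw [Real.norm_of_nonneg (div_nonneg (sig_pos _).le (Real.sqrt_nonneg _))]
    gcongr
    apply sig_mono
    have := abs_lt.1 (by simpa [Real.dist_eq] using hl)
    nlinarith [this.2]
  · exact key_integrable ha (l0+1)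
  · rw [ae_restrict_iff' measurableSet_Iio]
    filter_upwards with u hu
    have hsq : Real.sqrt (-u) ≠ 0 := (Real.sqrt_pos.2 (by simpa using hu)).ne'
    exact ContinuousAt.div
      ((sig_cont.comp (continuous_const.mul (continuous_const.add continuous_id))).continuousAt)
      continuousAt_const hsq

theorem endpoint_equation_unique_solution (s T : ℝ) (hs : 0 < s) (hT : 0 < T) :
    (∃! lam0 : ℝ, lam0 - 1 =
        -(s ^ (-(1:ℝ)/2) * T ^ ((1:ℝ)/3) / Real.pi) *
          ∫ u in Set.Iio (0:ℝ), sigmaF (s * T ^ ((1:ℝ)/3) * (u + lam0)) / Real.sqrt (-u)) ∧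
    ∀ lam0 : ℝ, (lam0 - 1 =
        -(s ^ (-(1:ℝ)/2) * T ^ ((1:ℝ)/3) / Real.pi) *
          ∫ u in Set.Iio (0:ℝ), sigmaF (s * T ^ ((1:ℝ)/3) * (u + lam0)) / Real.sqrt (-u)) →
      lam0 < 1 := by
  set a : ℝ := s * T ^ ((1:ℝ)/3) with ha_def
  set c : ℝ := s ^ (-(1:ℝ)/2) * T ^ ((1:ℝ)/3) / Real.pi with hc_def
  have ha : 0 < a := mul_pos hs (Real.rpow_pos_of_pos hT _)
  have hc : 0 < c := div_pos (mul_pos (Real.rpow_pos_of_pos hs _) (Real.rpow_pos_of_pos hT _))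
    Real.pi_pos
  have hEq : ∀ l : ℝ, (l - 1 =
      -c * ∫ u in Set.Iio (0:ℝ), sigmaF (a * (u + l)) / Real.sqrt (-u)) ↔
      l - 1 + c * Fint a l = 0 := by
    intro l
    rw [Fint]
    constructor <;> intro h <;> linarith
  set g : ℝ → ℝ := fun l => l - 1 + c * Fint a l with hg_def
  have hgmono : StrictMono g := by
    intro x y hxy
    have := mul_le_mul_of_nonneg_left (F_mono ha hxy.le) hc.le
    simp only [hg_def]
    linarith
  have hgcont : Continuous g :=
    (continuous_id.sub continuous_const).add (continuous_const.mul (F_cont ha))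
  have hF1 : 0 < Fint a 1 := F_pos ha 1
  set L : ℝ := -c * Fint a 1 with hL_def
  have hL1 : L < 1 := by nlinarith
  have hgL : g L ≤ -1 := by
    have hFL : Fint a L ≤ Fint a 1 := F_mono ha hL1.le
    have : c * Fint a L ≤ c * Fint a 1 := mul_le_mul_of_nonneg_left hFL hc.le
    simp only [hg_def]
    nlinarith
  have hg1 : 0 < g 1 := by
    simp only [hg_def]
    nlinarith
  obtain ⟨x, hx, hgx⟩ : ∃ x ∈ Icc L 1, g x = 0 := by
    have := intermediate_value_Icc hL1.le (hgcont.continuousOn (s := Icc L 1))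
    have h0 : (0:ℝ) ∈ Icc (g L) (g 1) := ⟨by linarith, hg1.le⟩
    obtain ⟨x, hx, hgx⟩ := this h0
    exact ⟨x, hx, hgx⟩
  refine ⟨⟨x, (hEq x).2 hgx, ?_⟩, ?_⟩
  · intro y hy
    exact hgmono.injective (((hEq y).1 hy).trans hgx.symm)
  · intro l hl
    rw [hEq] at hl
    have := F_pos ha l
    nlinarith
end
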